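/- For T > 0, the quantity G(T) := (exp(−T/4) − √(πT) Φ(−√(T/2))) / (exp(−T/4) + √(πT) Φ(−√(T/2))) satisfies 0 < G(T) < 1 for every T > 0, G is strictly decreasing on (0,∞), and lim_{T→0+} G(T) = 1. -/

import Mathlib

/-!
Put x = √(T/2). Then exp(−T/4) = √(2π) φ(x) and √(πT) = √(2π) x, so
G(T) = (1 − ρ)/(1 + ρ) with ρ = x R(x), where R(x) = Φ(−x)/φ(x) is the Mills ratio.
Since R' = xR − 1, we get (xR)' = (1 + x²)R − x > 0 by Gordon's bound R(x) > x/(1 + x²);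
and xR(x) < 1 for x > 0. Both bounds hold because a function with negative derivative
that tends to 0 at +∞ is positive. Thus ρ increases from 0 at T = 0 and stays in (0, 1),
while r ↦ (1 − r)/(1 + r) is decreasing.
-/

open Real Set Filter MeasureTheory Topology ProbabilityTheory

lemma pos_of_hasDerivAt_neg_of_tendsto_zero {f f' : ℝ → ℝ} {a x : ℝ}
    (hf : ∀ y ∈ Ioi a, HasDerivAt f (f' y) y) (hf' : ∀ y ∈ Ioi a, f' y < 0)
    (hlim : Tendsto f atTop (𝓝 0)) (hx : a < x) : 0 < f x := by
  have hanti : StrictAntiOn f (Ioi a) :=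
    strictAntiOn_of_hasDerivWithinAt_neg (convex_Ioi a)
      (fun y hy => (hf y hy).continuousAt.continuousWithinAt)
      (fun y hy => (hf y (interior_subset hy)).hasDerivWithinAt)
      (fun y hy => hf' y (interior_subset hy))
  have hx1 : a < x + 1 := by linarith
  have hnonneg : 0 ≤ f (x + 1) :=
    le_of_tendsto hlim <| eventually_atTop.2 ⟨x + 1, fun z hz =>
      hanti.antitoneOn hx1 (hx1.trans_le hz) hz⟩
  exact hnonneg.trans_lt (hanti hx hx1 (lt_add_one x))

local notation "φ" => gaussianPDFReal 0 1

lemma gaussianPDFReal_zero_one : φ = fun x => (√(2 * π))⁻¹ * exp (-x ^ 2 / 2) := by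
  ext x; simp [gaussianPDFReal]

lemma gaussianPDFReal_zero_one_pos (x : ℝ) : 0 < φ x := gaussianPDFReal_pos 0 1 x one_ne_zero

lemma gaussianPDFReal_zero_one_neg (x : ℝ) : φ (-x) = φ x := by
  simp [gaussianPDFReal_zero_one]

lemma hasDerivAt_gaussianPDFReal_zero_one (x : ℝ) : HasDerivAt φ (-x * φ x) x := by
  have hexponent : HasDerivAt (fun y : ℝ => -y ^ 2 / 2) (-x) x := by
    refine ((hasDerivAt_pow 2 x).neg.div_const 2).congr_deriv ?_
    push_cast; ring
  rw [gaussianPDFReal_zero_one]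
  exact (hexponent.exp.const_mul (√(2 * π))⁻¹).congr_deriv (by ring)

lemma tendsto_gaussianPDFReal_zero_one_atTop : Tendsto φ atTop (𝓝 0) := by
  have h : Tendsto (fun x : ℝ => -x ^ 2 / 2) atTop atBot :=
    (tendsto_neg_atBot_iff.2 (tendsto_pow_atTop two_ne_zero)).atBot_div_const two_pos
  simpa [gaussianPDFReal_zero_one] using (tendsto_exp_atBot.comp h).const_mul (√(2 * π))⁻¹

noncomputable def normalCDF (t : ℝ) : ℝ := ∫ y in Iic t, φ y

lemma normalCDF_eq_add_intervalIntegral (t : ℝ) :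
    normalCDF t = normalCDF 0 + ∫ y in (0 : ℝ)..t, φ y := by
  rw [← intervalIntegral.integral_Iic_sub_Iic (integrable_gaussianPDFReal 0 1).integrableOn
    (integrable_gaussianPDFReal 0 1).integrableOn, normalCDF, normalCDF]
  ring

lemma hasDerivAt_normalCDF (t : ℝ) : HasDerivAt normalCDF (φ t) t := by
  have hφ : Continuous φ := by rw [gaussianPDFReal_zero_one]; fun_prop
  rw [funext normalCDF_eq_add_intervalIntegral]
  exact (intervalIntegral.integral_hasDerivAt_right
    (integrable_gaussianPDFReal 0 1).intervalIntegrable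
    (hφ.stronglyMeasurableAtFilter _ _) hφ.continuousAt).const_add _

lemma tendsto_normalCDF_atBot : Tendsto normalCDF atBot (𝓝 0) := by
  have h := intervalIntegral_tendsto_integral_Iic (μ := volume) 0
    (integrable_gaussianPDFReal 0 1).integrableOn tendsto_id
  have h2 : Tendsto (fun t => normalCDF 0 - ∫ y in t..0, φ y) atBot
      (𝓝 (normalCDF 0 - normalCDF 0)) := tendsto_const_nhds.sub h
  rw [sub_self] at h2
  refine h2.congr fun t => ?_
  rw [intervalIntegral.integral_symm, normalCDF_eq_add_intervalIntegral t]
  ring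

lemma hasDerivAt_normalCDF_neg (x : ℝ) :
    HasDerivAt (fun y => normalCDF (-y)) (-φ x) x :=
  ((hasDerivAt_normalCDF (-x)).comp x (hasDerivAt_neg x)).congr_deriv
    (by rw [gaussianPDFReal_zero_one_neg, mul_neg_one])

lemma tendsto_normalCDF_neg_atTop : Tendsto (fun x => normalCDF (-x)) atTop (𝓝 0) :=
  tendsto_normalCDF_atBot.comp tendsto_neg_atTop_atBot

noncomputable def millsRatio (x : ℝ) : ℝ := normalCDF (-x) / φ x

lemma gaussianPDFReal_zero_one_mul_millsRatio (x : ℝ) : φ x * millsRatio x = normalCDF (-x) :=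
  mul_div_cancel₀ _ (gaussianPDFReal_zero_one_pos x).ne'

lemma hasDerivAt_millsRatio (x : ℝ) : HasDerivAt millsRatio (x * millsRatio x - 1) x := by
  have hφ := (gaussianPDFReal_zero_one_pos x).ne'
  refine ((hasDerivAt_normalCDF_neg x).div (hasDerivAt_gaussianPDFReal_zero_one x)
    hφ).congr_deriv ?_
  rw [millsRatio]
  field_simp
  ring

lemma continuous_millsRatio : Continuous millsRatio :=
  continuous_iff_continuousAt.2 fun x => (hasDerivAt_millsRatio x).continuousAt

lemma div_one_add_sq_lt_millsRatio (x : ℝ) : x / (1 + x ^ 2) < millsRatio x := by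
  have hgap : 0 < normalCDF (-x) - x * φ x / (1 + x ^ 2) := by
    refine pos_of_hasDerivAt_neg_of_tendsto_zero (a := x - 1)
      (f := fun y => normalCDF (-y) - y * φ y / (1 + y ^ 2))
      (f' := fun y => -(2 * φ y) / (1 + y ^ 2) ^ 2) (fun y _ => ?_) (fun y _ => ?_) ?_
      (by linarith)
    · have hden : (1 : ℝ) + y ^ 2 ≠ 0 := by positivity
      refine ((hasDerivAt_normalCDF_neg y).sub (((hasDerivAt_id y).mul
        (hasDerivAt_gaussianPDFReal_zero_one y)).div ((hasDerivAt_pow 2 y).const_add 1)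
          hden)).congr_deriv ?_
      simp only [id, Pi.mul_apply]
      field_simp
      ring
    · have := gaussianPDFReal_zero_one_pos y
      exact div_neg_of_neg_of_pos (by linarith) (by positivity)
    · have hsmall : Tendsto (fun y => y * φ y / (1 + y ^ 2)) atTop (𝓝 0) := by
        refine squeeze_zero' ?_ ?_ tendsto_gaussianPDFReal_zero_one_atTop
        · filter_upwards [eventually_ge_atTop 0] with y hy
          have := (gaussianPDFReal_zero_one_pos y).le
          positivity
        · filter_upwards [eventually_ge_atTop 0] with y hy
          have := (gaussianPDFReal_zero_one_pos y).le
          have hy1 : y ≤ 1 + y ^ 2 := by nlinarith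
          rw [div_le_iff₀ (by positivity)]
          nlinarith [mul_le_mul_of_nonneg_left hy1 this]
      simpa using tendsto_normalCDF_neg_atTop.sub hsmall
  refine lt_of_mul_lt_mul_left (a := φ x) ?_ (gaussianPDFReal_zero_one_pos x).le
  rw [gaussianPDFReal_zero_one_mul_millsRatio, ← mul_div_assoc, mul_comm (φ x)]
  linarith

lemma mul_millsRatio_lt_one {x : ℝ} (hx : 0 < x) : x * millsRatio x < 1 := by
  have hgap : 0 < φ x / x - normalCDF (-x) := by
    refine pos_of_hasDerivAt_neg_of_tendsto_zero (a := 0) (f := fun y => φ y / y - normalCDF (-y))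
      (f' := fun y => -φ y / y ^ 2) (fun y hy => ?_) (fun y hy => ?_) ?_ hx
    · refine (((hasDerivAt_gaussianPDFReal_zero_one y).div (hasDerivAt_id y) (ne_of_gt hy)).sub
        (hasDerivAt_normalCDF_neg y)).congr_deriv ?_
      have hy0 : y ≠ 0 := ne_of_gt hy
      simp only [id]
      field_simp
      ring
    · have := gaussianPDFReal_zero_one_pos y
      exact div_neg_of_neg_of_pos (by linarith) (pow_pos hy 2)
    · simpa using (tendsto_gaussianPDFReal_zero_one_atTop.div_atTop tendsto_id).sub
        tendsto_normalCDF_neg_atTop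
  rw [sub_pos, ← gaussianPDFReal_zero_one_mul_millsRatio, lt_div_iff₀ hx] at hgap
  have hφ := gaussianPDFReal_zero_one_pos x
  nlinarith

lemma strictMono_mul_millsRatio : StrictMono fun x => x * millsRatio x := by
  refine strictMono_of_hasDerivAt_pos (fun x => (hasDerivAt_id x).mul (hasDerivAt_millsRatio x))
    fun x => ?_
  have hden : (0 : ℝ) < 1 + x ^ 2 := by positivity
  have := (div_lt_iff₀ hden).1 (div_one_add_sq_lt_millsRatio x)
  simp only [id]
  nlinarith

lemma mul_millsRatio_mem_Ioo {x : ℝ} (hx : 0 < x) : x * millsRatio x ∈ Ioo 0 1 :=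
  ⟨by simpa using strictMono_mul_millsRatio hx, mul_millsRatio_lt_one hx⟩

lemma strictAntiOn_one_sub_div_one_add :
    StrictAntiOn (fun r : ℝ => (1 - r) / (1 + r)) (Ioi (-1)) := by
  intro r hr s hs hrs
  rw [mem_Ioi] at hr hs
  rw [div_lt_div_iff₀ (by linarith) (by linarith)]
  linarith

lemma one_sub_div_one_add_mem_Ioo {r : ℝ} (hr : r ∈ Ioo (0 : ℝ) 1) :
    (1 - r) / (1 + r) ∈ Ioo (0 : ℝ) 1 := by
  obtain ⟨hr0, hr1⟩ := hr
  exact ⟨div_pos (by linarith) (by linarith), (div_lt_one (by linarith)).2 (by linarith)⟩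

lemma exp_neg_div_four_eq {T : ℝ} (hT : 0 ≤ T) :
    exp (-T / 4) = √(2 * π) * φ √(T / 2) := by
  rw [gaussianPDFReal_zero_one, ← mul_assoc, mul_inv_cancel₀ (by positivity), one_mul,
    sq_sqrt (by linarith)]
  ring_nf

lemma sqrt_pi_mul_eq (T : ℝ) : √(π * T) = √(2 * π) * √(T / 2) := by
  rw [← sqrt_mul (by positivity)]
  ring_nf

lemma pickands_eq_mills {T : ℝ} (hT : 0 ≤ T) :
    (exp (-T / 4) - √(π * T) * normalCDF (-√(T / 2)))
        / (exp (-T / 4) + √(π * T) * normalCDF (-√(T / 2)))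
      = (1 - √(T / 2) * millsRatio √(T / 2)) / (1 + √(T / 2) * millsRatio √(T / 2)) := by
  set x := √(T / 2)
  have hc : 0 < √(2 * π) * φ x := mul_pos (by positivity) (gaussianPDFReal_zero_one_pos x)
  rw [exp_neg_div_four_eq hT, sqrt_pi_mul_eq, ← gaussianPDFReal_zero_one_mul_millsRatio,
    ← mul_div_mul_left (1 - x * millsRatio x) _ hc.ne']
  congr 1 <;> ring

/-- the generalized Pickands constant for α = 1,
G(T) = (exp(−T/4) − √(πT) Φ(−√(T/2)))/(exp(−T/4) + √(πT) Φ(−√(T/2))),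
satisfies 0 < G(T) < 1 for all T > 0, is strictly decreasing on (0,∞),
and tends to 1 as T → 0⁺. -/
theorem generalized_pickands_one (Φ : ℝ → ℝ)
    (hΦ : ∀ x : ℝ, Φ x = ∫ y in Iic x, (Real.sqrt (2 * π))⁻¹ * Real.exp (-y ^ 2 / 2))
    (G : ℝ → ℝ)
    (hG : ∀ T : ℝ, G T = (Real.exp (-T / 4) - Real.sqrt (π * T) * Φ (-Real.sqrt (T / 2)))
      / (Real.exp (-T / 4) + Real.sqrt (π * T) * Φ (-Real.sqrt (T / 2)))) :
    (∀ T : ℝ, 0 < T → 0 < G T ∧ G T < 1) ∧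
      StrictAntiOn G (Ioi 0) ∧
      Tendsto G (nhdsWithin 0 (Ioi 0)) (nhds 1) := by
  have hΦ_eq : Φ = normalCDF := funext fun x => by rw [hΦ, normalCDF, gaussianPDFReal_zero_one]
  set ρ : ℝ → ℝ := fun T => √(T / 2) * millsRatio √(T / 2)
  have hGρ : ∀ T ∈ Ici (0 : ℝ), G T = (1 - ρ T) / (1 + ρ T) := fun T hT => by
    rw [hG, hΦ_eq, pickands_eq_mills hT]
  have hρ_mem : ∀ T ∈ Ioi (0 : ℝ), ρ T ∈ Ioo 0 1 := fun T hT =>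
    mul_millsRatio_mem_Ioo (sqrt_pos.2 (half_pos hT))
  have hρ_mono : StrictMonoOn ρ (Ici 0) := strictMono_mul_millsRatio.comp_strictMonoOn
    fun a ha b _ hab => sqrt_lt_sqrt (by linarith [mem_Ici.1 ha]) (by linarith)
  have hρ_zero : ρ 0 = 0 := by simp [ρ]
  refine ⟨fun T hT => hGρ T (Ioi_subset_Ici_self hT) ▸
    one_sub_div_one_add_mem_Ioo (hρ_mem T hT), fun a ha b hb hab => ?_, ?_⟩
  · have hmem : ∀ T ∈ Ioi (0 : ℝ), ρ T ∈ Ioi (-1) := fun T hT =>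
      Ioi_subset_Ioi (by norm_num) (Ioo_subset_Ioi_self (hρ_mem T hT))
    rw [hGρ a (Ioi_subset_Ici_self ha), hGρ b (Ioi_subset_Ici_self hb)]
    exact strictAntiOn_one_sub_div_one_add (hmem a ha) (hmem b hb)
      (hρ_mono (Ioi_subset_Ici_self ha) (Ioi_subset_Ici_self hb) hab)
  · have hρ_cont : Continuous ρ := by
      have := continuous_millsRatio
      fun_prop
    have hcont : ContinuousAt (fun T => (1 - ρ T) / (1 + ρ T)) 0 :=
      (continuousAt_const.sub hρ_cont.continuousAt).div
        (continuousAt_const.add hρ_cont.continuousAt) (by simp [hρ_zero])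
    have h := hcont.tendsto.mono_left (nhdsWithin_le_nhds (s := Ioi 0))
    rw [hρ_zero, sub_zero, add_zero, div_one] at h
    exact h.congr' (eventually_nhdsWithin_of_forall fun T hT =>
      (hGρ T (Ioi_subset_Ici_self hT)).symm)
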